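/- Let α, β > 0 and 0 < μ < β. Then for every n ∈ ℕ and every x ∈ [0,1], ∫_0^1 R_n^{α,β}(xz) · z^{α−1}(1−z)^{μ−1}/B(α,μ) dz = (ζ_n^{α+μ, β−μ}/ζ_n^{α,β}) R_n^{α+μ, β−μ}(x). -/

import Mathlib

open MeasureTheory Finset

noncomputable section

/-- Rising factorial `(a)_(n) = a (a+1) ⋯ (a+n−1)`. -/
def rf (a : ℝ) : ℕ → ℝ
  | 0 => 1
  | n + 1 => rf a n * (a + n)

/-- Falling factorial `N_[n] = N (N−1) ⋯ (N−n+1)` of a natural number, as a real. -/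
def ff (N n : ℕ) : ℝ := (N.descFactorial n : ℝ)

/-- Triangular array `a^θ_{n,m}` (meaningful for `0 ≤ m ≤ n`). -/
def acoef (θ : ℝ) (n m : ℕ) : ℝ :=
  if n = 0 then 1
  else (θ + 2 * n - 1) * (-1 : ℝ) ^ (n - m) * rf (θ + m) (n - 1) /
    ((m.factorial : ℝ) * ((n - m).factorial : ℝ))

/-- The simplex `Δ_{d−1} = {x ∈ [0,1]^d : x₁ + ⋯ + x_d = 1}`. -/
def simplex (d : ℕ) : Set (Fin d → ℝ) :=
  {x | (∀ i, 0 ≤ x i ∧ x i ≤ 1) ∧ ∑ i, x i = 1}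

/-- `ξ^α_m(x,y)`. -/
def xiK {d : ℕ} (α : Fin d → ℝ) (m : ℕ) (x y : Fin d → ℝ) : ℝ :=
  ∑ l ∈ Finset.Nat.antidiagonalTuple d m,
    ((m.factorial : ℝ) / ∏ i, ((l i).factorial : ℝ)) *
      (rf (∑ i, α i) m / ∏ i, rf (α i) (l i)) * ∏ i, (x i * y i) ^ l i

/-- Jacobi polynomial kernel `Q^α_n(x,y)`. -/
def Qker {d : ℕ} (α : Fin d → ℝ) (n : ℕ) (x y : Fin d → ℝ) : ℝ :=
  ∑ m ∈ Finset.range (n + 1), acoef (∑ i, α i) n m * xiK α m x y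

/-- Dirichlet–multinomial pmf `DM_α(l; m)`. -/
def DM {d : ℕ} (α : Fin d → ℝ) (l : Fin d → ℕ) (m : ℕ) : ℝ :=
  ((m.factorial : ℝ) / ∏ i, ((l i).factorial : ℝ)) *
    (∏ i, rf (α i) (l i)) / rf (∑ i, α i) m

/-- `ξ^{H,α}_m(r,s)`. -/
def xiH {d : ℕ} (α : Fin d → ℝ) (m : ℕ) (r s : Fin d → ℕ) : ℝ :=
  ∑ l ∈ Finset.Nat.antidiagonalTuple d m,
    DM (fun i => α i + r i) l m * DM (fun i => α i + s i) l m / DM α l m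

/-- Hahn polynomial kernel `H^α_n(r,s)` for `|r| = |s| = N`. -/
def Hker {d : ℕ} (α : Fin d → ℝ) (N n : ℕ) (r s : Fin d → ℕ) : ℝ :=
  (rf ((∑ i, α i) + N) n / ff N n) *
    ∑ m ∈ Finset.range (n + 1), acoef (∑ i, α i) n m * xiH α m r s

/-- `χ^{H,α}_m(r,s)`. -/
def chiH {d : ℕ} (α : Fin d → ℝ) (N m : ℕ) (r s : Fin d → ℕ) : ℝ :=
  ∑ l ∈ Finset.Nat.antidiagonalTuple d m,
    (1 / DM α l m) *
      (((m.factorial : ℝ) / ∏ i, ((l i).factorial : ℝ)) * (∏ i, ff (r i) (l i)) / ff N m) *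
      (((m.factorial : ℝ) / ∏ i, ((l i).factorial : ℝ)) * (∏ i, ff (s i) (l i)) / ff N m)

/-- Normalized Jacobi polynomial `R_n^{a,b}` on `[0,1]`. -/
def Rpoly (a b : ℝ) (n : ℕ) (x : ℝ) : ℝ :=
  ∑ k ∈ Finset.range (n + 1),
    (-1 : ℝ) ^ k * (n.choose k : ℝ) * (rf ((n : ℝ) + (a + b) - 1) k / rf b k) * (1 - x) ^ k

/-- `ζ_n^{a,b}`. -/
def zeta (a b : ℝ) (n : ℕ) : ℝ :=
  if n = 0 then 1
  else ((a + b) + 2 * n - 1) * rf (a + b) (n - 1) * rf b n / ((n.factorial : ℝ) * rf a n)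

/-- Hahn polynomial `h_n^{a,b}(r; N)`. -/
def hahnPoly (a b : ℝ) (N n r : ℕ) : ℝ :=
  ∑ k ∈ Finset.range (n + 1),
    (-1 : ℝ) ^ k * (n.choose k : ℝ) * rf ((n : ℝ) + (a + b) - 1) k * ff r k /
      (rf a k * ff N k)

/-- `u^{a,b}_{N,n}`. -/
def uCoef (a b : ℝ) (N n : ℕ) : ℝ :=
  if n = 0 then 1
  else (N.choose n : ℝ) * ((a + b) + 2 * n - 1) * rf (a + b) (n - 1) * rf a n /
    (rf ((a + b) + N) n * rf b n)

/-- Beta function `B(a,b) = Γ(a)Γ(b)/Γ(a+b)`. -/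
def BetaFn (a b : ℝ) : ℝ := Real.Gamma a * Real.Gamma b / Real.Gamma (a + b)

/-- Condition (G) on the parameter vector `α`. -/
def CondG {d : ℕ} (α : Fin d → ℝ) : Prop :=
  ∀ j : Fin d, 0 < (j : ℕ) →
    (α j ≤ ∑ i ∈ Finset.univ.filter fun i : Fin d => (i : ℕ) < (j : ℕ), α i) ∧
      (1 / 2 ≤ α j ∨ 2 ≤ ∑ i ∈ Finset.univ.filter fun i : Fin d => (i : ℕ) ≤ (j : ℕ), α i)

/-- Density of the Dirichlet distribution in the coordinates `(u₁, …, u_{d−1})`. -/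
def dirichletDensity (k : ℕ) (α : Fin (k + 1) → ℝ) (u : Fin k → ℝ) : ℝ :=
  if (∀ i, 0 < u i ∧ u i < 1) ∧ ∑ i, u i < 1 then
    (Real.Gamma (∑ i, α i) / ∏ i, Real.Gamma (α i)) *
      (∏ i : Fin k, u i ^ (α (Fin.castSucc i) - 1)) * (1 - ∑ i, u i) ^ (α (Fin.last k) - 1)
  else 0

/-- The Dirichlet probability measure `D_α` on `Δ_{d−1} ⊆ ℝ^d`, `d = k + 1`. -/
def dirichlet (k : ℕ) (α : Fin (k + 1) → ℝ) : Measure (Fin (k + 1) → ℝ) :=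
  ((volume : Measure (Fin k → ℝ)).withDensity fun u =>
      ENNReal.ofReal (dirichletDensity k α u)).map fun u => Fin.snoc u (1 - ∑ i, u i)

/-! Expanding `(1 - y) ^ k` binomially and resumming with the Chu–Vandermonde identity puts
`R_n^{a,b}` in power form `(-1)^n (a)_n / (b)_n · ₂F₁(−n, n + a + b − 1; a; y)`. The `j`-th
moment of the Beta(a, μ) law is `(a)_j / (a + μ)_j`, so integrating `R_n^{a,b}(x z)` against it
turns the lower parameter `a` into `a + μ`. Since `(a + μ) + (b − μ) = a + b`, the result is a
multiple of `R_n^{a+μ,b−μ}(x)` in power form, and comparing the prefactors gives the ratio of the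
`ζ`'s. -/

lemma rf_succ (a : ℝ) (n : ℕ) : rf a (n + 1) = rf a n * (a + n) := rfl

lemma rf_pos {a : ℝ} (ha : 0 < a) (n : ℕ) : 0 < rf a n := by
  induction n with
  | zero => exact one_pos
  | succ n ih => exact mul_pos ih (by positivity)

lemma rf_add (a : ℝ) (m n : ℕ) : rf a (m + n) = rf a m * rf (a + m) n := by
  induction n with
  | zero => simp [rf]
  | succ n ih =>
    rw [← add_assoc, rf_succ, ih, rf_succ, mul_assoc]
    push_cast
    ring_nf

lemma rf_succ_left (a : ℝ) (n : ℕ) : rf a (n + 1) = a * rf (a + 1) n := by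
  simpa [rf, add_comm 1 n] using rf_add a 1 n

lemma rf_of_le {a : ℝ} {j n : ℕ} (h : j ≤ n) : rf a n = rf a j * rf (a + j) (n - j) := by
  rw [← rf_add, Nat.add_sub_cancel' h]

lemma rf_one_sub_sub (c : ℝ) (m : ℕ) : rf (1 - c - m) m = (-1) ^ m * rf c m := by
  induction m generalizing c with
  | zero => simp [rf]
  | succ m ih =>
    have h : (1 : ℝ) - c - (m + 1 : ℕ) + 1 = 1 - c - m := by push_cast; ring
    rw [rf_succ_left, h, ih, rf_succ]
    push_cast
    ring

lemma sum_choose_rf_div_rf_succ (m : ℕ) (c d : ℝ) :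
    ∑ i ∈ range (m + 2), (-1) ^ i * ((m + 1).choose i : ℝ) * rf c i / rf d i =
      ∑ i ∈ range (m + 1), (-1) ^ i * (m.choose i : ℝ) * rf c i / rf d i -
        c / d *
          ∑ i ∈ range (m + 1), (-1) ^ i * (m.choose i : ℝ) * rf (c + 1) i / rf (d + 1) i := by
  have h := Finset.sum_choose_succ_mul (R := ℝ) (fun i _ => (-1) ^ i * rf c i / rf d i) m
  simp only [rf_succ_left, pow_succ] at h
  rw [Finset.mul_sum, ← Finset.sum_sub_distrib]
  convert h using 1
  · exact Finset.sum_congr rfl fun i _ => by ring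
  · rw [← Finset.sum_add_distrib]
    exact Finset.sum_congr rfl fun i _ => by ring

/-- Chu–Vandermonde: `₂F₁(−m, c; d; 1) = (d − c)_m / (d)_m`. -/
theorem sum_choose_rf_div_rf (m : ℕ) (c : ℝ) {d : ℝ} (hd : 0 < d) :
    ∑ i ∈ range (m + 1), (-1) ^ i * (m.choose i : ℝ) * rf c i / rf d i =
      rf (d - c) m / rf d m := by
  induction m generalizing c d with
  | zero => simp [rf]
  | succ m ih =>
    have hrf : rf (d + 1) m = rf d m * (d + m) / d := by
      rw [eq_div_iff hd.ne', mul_comm, ← rf_succ_left, rf_succ]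
    rw [sum_choose_rf_div_rf_succ, ih c hd, ih (c + 1) (by linarith),
      show d + 1 - (c + 1) = d - c by ring, rf_succ (d - c), rf_succ d, hrf]
    have := (rf_pos hd m).ne'
    have : d + m ≠ 0 := by positivity
    field_simp
    ring

lemma sum_Icc_choose_mul_choose_mul_rf_div_rf {n j : ℕ} (hj : j ≤ n) (c : ℝ) {b : ℝ}
    (hb : 0 < b) :
    ∑ k ∈ Icc j n, (-1) ^ k * (n.choose k : ℝ) * (k.choose j : ℝ) * rf c k / rf b k =
      (-1) ^ j * (n.choose j : ℝ) * rf c j * rf (b - c) (n - j) / rf b n := by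
  have hbj : 0 < b + j := by positivity
  have hterm : ∀ i ∈ range (n + 1 - j),
      (-1) ^ (j + i) * (n.choose (j + i) : ℝ) * ((j + i).choose j : ℝ) * rf c (j + i) /
          rf b (j + i) =
        (-1) ^ j * (n.choose j : ℝ) * rf c j / rf b j *
          ((-1) ^ i * ((n - j).choose i : ℝ) * rf (c + j) i / rf (b + j) i) := by
    intro i hi
    have hchoose : (n.choose (j + i) : ℝ) * ((j + i).choose j : ℝ) =
        (n.choose j : ℝ) * ((n - j).choose i : ℝ) := by
      have h := Nat.choose_mul (n := n) (Nat.le_add_right j i)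
      rw [Nat.add_sub_cancel_left] at h
      exact_mod_cast h
    have := (rf_pos hb j).ne'
    have := (rf_pos hbj i).ne'
    rw [rf_add, rf_add, pow_add]
    field_simp
    linear_combination rf c j * rf (c + j) i * hchoose
  rw [← Finset.Ico_add_one_right_eq_Icc, Finset.sum_Ico_eq_sum_range, Finset.sum_congr rfl hterm,
    ← Finset.mul_sum, show n + 1 - j = n - j + 1 by omega, sum_choose_rf_div_rf _ _ hbj,
    show b + j - (c + j) = b - c by ring, rf_of_le (a := b) hj]
  have := (rf_pos hb j).ne'
  have := (rf_pos hbj (n - j)).ne'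
  field_simp

/-- The terminating hypergeometric series `₂F₁(−n, c; e; x)`. -/
def hyp2F1 (n : ℕ) (c e x : ℝ) : ℝ :=
  ∑ j ∈ range (n + 1), (n.choose j : ℝ) * (rf c j / rf e j) * (-x) ^ j

lemma one_sub_pow_eq_sum (y : ℝ) (k : ℕ) :
    (1 - y) ^ k = ∑ j ∈ range (k + 1), (k.choose j : ℝ) * (-y) ^ j := by
  rw [sub_eq_neg_add, add_pow]
  exact Finset.sum_congr rfl fun j _ => by ring

theorem Rpoly_eq_hyp2F1 {a b : ℝ} (ha : 0 < a) (hb : 0 < b) (n : ℕ) (y : ℝ) :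
    Rpoly a b n y = (-1) ^ n * (rf a n / rf b n) * hyp2F1 n (n + (a + b) - 1) a y := by
  simp only [Rpoly, hyp2F1, one_sub_pow_eq_sum, Finset.mul_sum]
  set c : ℝ := n + (a + b) - 1
  have hswap : ∀ F : ℕ → ℕ → ℝ,
      ∑ k ∈ range (n + 1), ∑ j ∈ range (k + 1), F k j =
        ∑ j ∈ range (n + 1), ∑ k ∈ Icc j n, F k j :=
    fun F => Finset.sum_comm' fun k j => by simp only [Finset.mem_range, Finset.mem_Icc]; omega
  have hreflect : ∀ j ≤ n, rf (b - c) (n - j) = (-1) ^ (n - j) * rf (a + j) (n - j) := by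
    intro j hj
    rw [← rf_one_sub_sub]
    congr 1
    push_cast [hj, c]
    ring
  rw [hswap]
  refine Finset.sum_congr rfl fun j hj => ?_
  have hjn : j ≤ n := Nat.lt_succ_iff.mp (Finset.mem_range.mp hj)
  have hinner :
      ∑ k ∈ Icc j n, (-1) ^ k * (n.choose k : ℝ) * (rf c k / rf b k) * (k.choose j : ℝ) =
      (-1) ^ j * (n.choose j : ℝ) * rf c j * ((-1) ^ (n - j) * rf (a + j) (n - j)) / rf b n := by
    rw [← hreflect j hjn, ← sum_Icc_choose_mul_choose_mul_rf_div_rf hjn _ hb]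
    exact Finset.sum_congr rfl fun k _ => by ring
  simp only [← mul_assoc]
  rw [← Finset.sum_mul, hinner, rf_of_le (a := a) hjn]
  have := (rf_pos ha j).ne'
  have := (rf_pos hb n).ne'
  have hsign : (-1 : ℝ) ^ j * (-1) ^ (n - j) = (-1) ^ n := by
    rw [← pow_add, Nat.add_sub_cancel' hjn]
  field_simp
  linear_combination (n.choose j : ℝ) * rf c j * rf (a + j) (n - j) * (-y) ^ j * hsign

lemma ofReal_rpow_mul_one_sub_rpow {z : ℝ} (hz : z ∈ Set.Ioc 0 1) (p q : ℝ) :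
    ((z ^ (p - 1) * (1 - z) ^ (q - 1) : ℝ) : ℂ) =
      (z : ℂ) ^ ((p : ℂ) - 1) * (1 - (z : ℂ)) ^ ((q : ℂ) - 1) := by
  rw [Complex.ofReal_mul, Complex.ofReal_cpow hz.1.le, Complex.ofReal_cpow (by linarith [hz.2])]
  push_cast
  rfl

lemma integrableOn_rpow_mul_one_sub_rpow {p q : ℝ} (hp : 0 < p) (hq : 0 < q) :
    IntegrableOn (fun z : ℝ => z ^ (p - 1) * (1 - z) ^ (q - 1)) (Set.Ioc 0 1) := by
  have h := Complex.betaIntegral_convergent (u := p) (v := q) (by simpa) (by simpa)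
  rw [intervalIntegrable_iff_integrableOn_Ioc_of_le zero_le_one] at h
  have h' := h.congr_fun (fun z hz => (ofReal_rpow_mul_one_sub_rpow hz p q).symm) measurableSet_Ioc
  simpa [IntegrableOn] using h'.re

lemma integral_rpow_mul_one_sub_rpow {p q : ℝ} (hp : 0 < p) (hq : 0 < q) :
    ∫ z in Set.Ioc (0 : ℝ) 1, z ^ (p - 1) * (1 - z) ^ (q - 1) = BetaFn p q := by
  have h := Complex.betaIntegral_eq_Gamma_mul_div (u := p) (v := q) (by simpa) (by simpa)
  rw [Complex.betaIntegral, intervalIntegral.integral_of_le zero_le_one,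
    ← setIntegral_congr_fun measurableSet_Ioc fun z hz => ofReal_rpow_mul_one_sub_rpow hz p q,
    integral_complex_ofReal, ← Complex.ofReal_add, Complex.Gamma_ofReal, Complex.Gamma_ofReal,
    Complex.Gamma_ofReal] at h
  exact_mod_cast h

lemma Gamma_add_nat {a : ℝ} (ha : 0 < a) (j : ℕ) :
    Real.Gamma (a + j) = rf a j * Real.Gamma a := by
  induction j with
  | zero => simp [rf]
  | succ j ih =>
    rw [Nat.cast_succ, ← add_assoc, Real.Gamma_add_one (by positivity), ih, rf_succ]
    ring

lemma betaFn_add_nat {a μ : ℝ} (ha : 0 < a) (hμ : 0 < μ) (j : ℕ) :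
    BetaFn (a + j) μ = rf a j / rf (a + μ) j * BetaFn a μ := by
  have haμ : 0 < a + μ := by linarith
  have := (Real.Gamma_pos_of_pos haμ).ne'
  have := (rf_pos haμ j).ne'
  rw [BetaFn, BetaFn, add_right_comm, Gamma_add_nat ha, Gamma_add_nat haμ]
  field_simp

lemma betaFn_pos {p q : ℝ} (hp : 0 < p) (hq : 0 < q) : 0 < BetaFn p q :=
  ProbabilityTheory.beta_pos hp hq

section BetaDensity

variable {a μ : ℝ}

lemma pow_mul_beta_density_eq {z : ℝ} (hz : z ∈ Set.Ioc 0 1) (j : ℕ) :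
    z ^ j * (z ^ (a - 1) * (1 - z) ^ (μ - 1) / BetaFn a μ) =
      z ^ (a + j - 1) * (1 - z) ^ (μ - 1) / BetaFn a μ := by
  rw [add_sub_right_comm, Real.rpow_add hz.1, Real.rpow_natCast]
  ring

lemma integrableOn_pow_mul_beta_density (ha : 0 < a) (hμ : 0 < μ) (j : ℕ) :
    IntegrableOn (fun z => z ^ j * (z ^ (a - 1) * (1 - z) ^ (μ - 1) / BetaFn a μ))
      (Set.Icc 0 1) := by
  rw [integrableOn_Icc_iff_integrableOn_Ioc]
  exact IntegrableOn.congr_fun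
    ((integrableOn_rpow_mul_one_sub_rpow (by positivity) hμ).div_const _)
    (fun z hz => (pow_mul_beta_density_eq hz j).symm) measurableSet_Ioc

lemma integral_pow_mul_beta_density (ha : 0 < a) (hμ : 0 < μ) (j : ℕ) :
    ∫ z in Set.Icc (0 : ℝ) 1, z ^ j * (z ^ (a - 1) * (1 - z) ^ (μ - 1) / BetaFn a μ) =
      rf a j / rf (a + μ) j := by
  rw [integral_Icc_eq_integral_Ioc,
    setIntegral_congr_fun measurableSet_Ioc fun z hz => pow_mul_beta_density_eq hz j,
    integral_div, integral_rpow_mul_one_sub_rpow (by positivity) hμ, betaFn_add_nat ha hμ]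
  have := (betaFn_pos ha hμ).ne'
  field_simp

theorem integral_hyp2F1_mul_beta_density (ha : 0 < a) (hμ : 0 < μ) (n : ℕ) (c x : ℝ) :
    ∫ z in Set.Icc (0 : ℝ) 1,
        hyp2F1 n c a (x * z) * (z ^ (a - 1) * (1 - z) ^ (μ - 1) / BetaFn a μ) =
      hyp2F1 n c (a + μ) x := by
  have hterm : ∀ j z, (n.choose j : ℝ) * (rf c j / rf a j) * (-(x * z)) ^ j *
      (z ^ (a - 1) * (1 - z) ^ (μ - 1) / BetaFn a μ) =
        (n.choose j : ℝ) * (rf c j / rf a j) * (-x) ^ j *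
          (z ^ j * (z ^ (a - 1) * (1 - z) ^ (μ - 1) / BetaFn a μ)) := fun j z => by
    rw [neg_mul_eq_neg_mul, mul_pow]
    ring
  simp only [hyp2F1, Finset.sum_mul, hterm]
  rw [integral_finsetSum _ fun j _ =>
    (integrableOn_pow_mul_beta_density ha hμ j).const_mul _]
  refine Finset.sum_congr rfl fun j _ => ?_
  rw [integral_const_mul, integral_pow_mul_beta_density ha hμ]
  have := (rf_pos ha j).ne'
  field_simp

end BetaDensity

lemma zeta_div_zeta {a b a' b' : ℝ} (ha : 0 < a) (hb : 0 < b) (h : a' + b' = a + b)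
    (n : ℕ) : zeta a' b' n / zeta a b n = rf b' n * rf a n / (rf a' n * rf b n) := by
  rcases n with _ | m
  · simp [zeta, rf]
  have hab : 0 < a + b := by positivity
  have := (rf_pos ha (m + 1)).ne'
  have := (rf_pos hb (m + 1)).ne'
  have := (rf_pos hab m).ne'
  have : a + b + 2 * ((m + 1 : ℕ) : ℝ) - 1 ≠ 0 := by push_cast; nlinarith
  simp only [zeta, h, Nat.add_sub_cancel, if_neg (Nat.succ_ne_zero m)]
  field_simp

theorem stmt_10_general (a b μ : ℝ) (ha : 0 < a) (hb : 0 < b) (hμ0 : 0 < μ) (hμb : μ < b)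
    (n : ℕ) (x : ℝ) :
    (∫ z in Set.Icc (0 : ℝ) 1,
        Rpoly a b n (x * z) * (z ^ (a - 1) * (1 - z) ^ (μ - 1) / BetaFn a μ)) =
      (zeta (a + μ) (b - μ) n / zeta a b n) * Rpoly (a + μ) (b - μ) n x := by
  have haμ : 0 < a + μ := by linarith
  have hbμ : 0 < b - μ := by linarith
  have hsum : a + μ + (b - μ) = a + b := by ring
  have hLHS : ∀ z, Rpoly a b n (x * z) * (z ^ (a - 1) * (1 - z) ^ (μ - 1) / BetaFn a μ) =
      (-1) ^ n * (rf a n / rf b n) *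
        (hyp2F1 n (n + (a + b) - 1) a (x * z) * (z ^ (a - 1) * (1 - z) ^ (μ - 1) / BetaFn a μ)) :=
    fun z => by rw [Rpoly_eq_hyp2F1 ha hb]; ring
  simp only [hLHS]
  rw [integral_const_mul, integral_hyp2F1_mul_beta_density ha hμ0, Rpoly_eq_hyp2F1 haμ hbμ,
    hsum, zeta_div_zeta ha hb hsum]
  have := (rf_pos haμ n).ne'
  have := (rf_pos hbμ n).ne'
  have := (rf_pos hb n).ne'
  field_simp

/-- second Beta-integral identity for normalized Jacobi polynomials. -/
theorem stmt_10 (a b μ : ℝ) (ha : 0 < a) (hb : 0 < b) (hμ0 : 0 < μ) (hμb : μ < b)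
    (n : ℕ) (x : ℝ) (hx : x ∈ Set.Icc (0 : ℝ) 1) :
    (∫ z in Set.Icc (0 : ℝ) 1,
        Rpoly a b n (x * z) * (z ^ (a - 1) * (1 - z) ^ (μ - 1) / BetaFn a μ)) =
      (zeta (a + μ) (b - μ) n / zeta a b n) * Rpoly (a + μ) (b - μ) n x :=
  stmt_10_general a b μ ha hb hμ0 hμb n x
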